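/- In Example 1, the function S₁ := −λ(Z₁) = π(x₁² + y₁² + c₂) on M = {G₁ = c₁, G₂ = c₂} (with c₁ > c₂ > 0) attains its maximum value π(√c₁ + c₂) exactly on the set {(x,y) ∈ M : x₁²+y₁² = √c₁, x₂ = y₂ = 0, x₃²+y₃² = c₂} and its minimum value π(√(c₁−c₂) + c₂) exactly on the set {(x,y) ∈ M : x₁²+y₁² = √(c₁−c₂), x₂²+y₂² = c₂, x₃ = y₃ = 0}, and these are the only critical submanifolds of S₁ on M. -/

import Mathlib

/-! On `M` one has `S₁ = π (‖p 0‖² + c₂)` and `‖p 0‖⁴ = c₁ - ‖p 1‖²` with `0 ≤ ‖p 1‖² ≤ c₂`, so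
`‖p 0‖²` ranges over `[√(c₁ - c₂), √c₁]`, the two ends being reached exactly where `p 1 = 0`,
resp. `p 2 = 0`.

Since `S₁ - π G₂ = π ‖z 0‖²`, on `T_pM ⊆ ker dG₂(p)` the differential of `S₁` is
`v ↦ 2π ⟪p 0, v 0⟫`. If `p 1 = 0` or `p 2 = 0`, the two constraints force `⟪p 0, v 0⟫ = 0`.
If neither vanishes, then with `r, s, t` the squared norms of `p 0, p 1, p 2` the tangent vector
`(s t • p 0, -2 r² t • p 1, 2 r² s • p 2)` has `⟪p 0, v 0⟫ = r s t ≠ 0`. -/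
open Real Complex
noncomputable section

/-- The Liouville 1-form `λ = (1/2) Σ_j (y_j dx_j − x_j dy_j)` on `ℝ⁶ ≃ ℂ³`. -/
def liouville (p : Fin 3 → ℂ) : (Fin 3 → ℂ) →L[ℝ] ℝ :=
  (1 / 2 : ℝ) • ∑ j : Fin 3,
    ((p j).im • (Complex.reCLM.comp (ContinuousLinearMap.proj j : (Fin 3 → ℂ) →L[ℝ] ℂ)) -
     (p j).re • (Complex.imCLM.comp (ContinuousLinearMap.proj j : (Fin 3 → ℂ) →L[ℝ] ℂ)))

/-- `G₁ = (x₁² + y₁²)² + x₂² + y₂²`. -/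
def G₁ (z : Fin 3 → ℂ) : ℝ :=
  ((z 0).re ^ 2 + (z 0).im ^ 2) ^ 2 + (z 1).re ^ 2 + (z 1).im ^ 2

/-- `G₂ = x₂² + y₂² + x₃² + y₃²`. -/
def G₂ (z : Fin 3 → ℂ) : ℝ :=
  (z 1).re ^ 2 + (z 1).im ^ 2 + (z 2).re ^ 2 + (z 2).im ^ 2

/-- `Z₁(z)_j = 2πi z_j`, i.e. `Z₁ = Σ_{j=1}^{3} (−2πy_j ∂/∂x_j + 2πx_j ∂/∂y_j)`. -/
def Z₁ (z : Fin 3 → ℂ) : Fin 3 → ℂ := fun j => (2 * π : ℝ) * Complex.I * z j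

/-- The function `S₁ := −λ(Z₁)`. -/
def S₁ (z : Fin 3 → ℂ) : ℝ := -(liouville z (Z₁ z))

/-- `M = {G₁ = c₁, G₂ = c₂}`. -/
def Mset (c₁ c₂ : ℝ) : Set (Fin 3 → ℂ) := {z | G₁ z = c₁ ∧ G₂ z = c₂}

/-- `p` is a critical point of `S₁` restricted to `M`: the differential of `S₁` at `p`
vanishes on the tangent space `T_pM = ker dG₁(p) ∩ ker dG₂(p)` (equivalently, by Lagrange
multipliers, `∇S₁(p)` is a linear combination of `∇G₁(p)` and `∇G₂(p)`). -/
def IsCritOnM (c₁ c₂ : ℝ) (p : Fin 3 → ℂ) : Prop :=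
  p ∈ Mset c₁ c₂ ∧ ∀ v : Fin 3 → ℂ,
    fderiv ℝ G₁ p v = 0 → fderiv ℝ G₂ p v = 0 → fderiv ℝ S₁ p v = 0

/-- The maximum set `{z ∈ M : x₁² + y₁² = √c₁, x₂ = y₂ = 0, x₃² + y₃² = c₂}`. -/
def maxSet (c₁ c₂ : ℝ) : Set (Fin 3 → ℂ) :=
  {z ∈ Mset c₁ c₂ | (z 0).re ^ 2 + (z 0).im ^ 2 = Real.sqrt c₁ ∧ z 1 = 0 ∧
    (z 2).re ^ 2 + (z 2).im ^ 2 = c₂}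

/-- The minimum set `{z ∈ M : x₁² + y₁² = √(c₁ − c₂), x₂² + y₂² = c₂, x₃ = y₃ = 0}`. -/
def minSet (c₁ c₂ : ℝ) : Set (Fin 3 → ℂ) :=
  {z ∈ Mset c₁ c₂ | (z 0).re ^ 2 + (z 0).im ^ 2 = Real.sqrt (c₁ - c₂) ∧
    (z 1).re ^ 2 + (z 1).im ^ 2 = c₂ ∧ z 2 = 0}

open scoped RealInnerProductSpace

lemma re_sq_add_im_sq (w : ℂ) : w.re ^ 2 + w.im ^ 2 = ‖w‖ ^ 2 := by
  rw [Complex.sq_norm, Complex.normSq_apply]; ring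

lemma G₁_eq : G₁ = fun z => (‖z 0‖ ^ 2) ^ 2 + ‖z 1‖ ^ 2 := by
  ext z; simp only [G₁, ← re_sq_add_im_sq]; ring

lemma G₂_eq : G₂ = fun z => ‖z 1‖ ^ 2 + ‖z 2‖ ^ 2 := by
  ext z; simp only [G₂, ← re_sq_add_im_sq]; ring

lemma S₁_eq : S₁ = fun z => π * (‖z 0‖ ^ 2 + ‖z 1‖ ^ 2 + ‖z 2‖ ^ 2) := by
  ext z
  simp [S₁, liouville, Z₁, Fin.sum_univ_three, ← re_sq_add_im_sq]
  ring

lemma hasFDerivAt_sq_norm_apply {ι E : Type*} [Fintype ι] [NormedAddCommGroup E]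
    [InnerProductSpace ℝ E] (j : ι) (p : ι → E) :
    HasFDerivAt (fun z : ι → E => ‖z j‖ ^ 2)
      (2 • (innerSL ℝ (p j)).comp (ContinuousLinearMap.proj j)) p :=
  (hasFDerivAt_apply j p).norm_sq

lemma fderiv_G₁_apply (p v : Fin 3 → ℂ) :
    fderiv ℝ G₁ p v = 4 * ‖p 0‖ ^ 2 * ⟪p 0, v 0⟫ + 2 * ⟪p 1, v 1⟫ := by
  rw [G₁_eq, (((hasFDerivAt_sq_norm_apply 0 p).pow 2).fun_add
    (hasFDerivAt_sq_norm_apply 1 p)).fderiv]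
  simp [-Complex.inner]; ring

lemma fderiv_G₂_apply (p v : Fin 3 → ℂ) :
    fderiv ℝ G₂ p v = 2 * ⟪p 1, v 1⟫ + 2 * ⟪p 2, v 2⟫ := by
  rw [G₂_eq, ((hasFDerivAt_sq_norm_apply 1 p).fun_add (hasFDerivAt_sq_norm_apply 2 p)).fderiv]
  simp [-Complex.inner]

lemma fderiv_S₁_apply (p v : Fin 3 → ℂ) :
    fderiv ℝ S₁ p v = 2 * π * (⟪p 0, v 0⟫ + ⟪p 1, v 1⟫ + ⟪p 2, v 2⟫) := by
  rw [S₁_eq, ((((hasFDerivAt_sq_norm_apply 0 p).fun_add (hasFDerivAt_sq_norm_apply 1 p)).fun_add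
    (hasFDerivAt_sq_norm_apply 2 p)).const_mul π).fderiv]
  simp [-Complex.inner]; ring

section

variable {c₁ c₂ : ℝ} {p : Fin 3 → ℂ}

lemma mem_Mset_iff :
    p ∈ Mset c₁ c₂ ↔ (‖p 0‖ ^ 2) ^ 2 + ‖p 1‖ ^ 2 = c₁ ∧ ‖p 1‖ ^ 2 + ‖p 2‖ ^ 2 = c₂ := by
  show G₁ p = c₁ ∧ G₂ p = c₂ ↔ _
  rw [G₁_eq, G₂_eq]

lemma S₁_eq_of_mem_Mset (hp : p ∈ Mset c₁ c₂) :
    S₁ p = π * (‖p 0‖ ^ 2 + c₂) := by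
  simp only [S₁_eq]
  linear_combination π * (mem_Mset_iff.1 hp).2

lemma sq_norm_le_sqrt_of_mem_Mset (hp : p ∈ Mset c₁ c₂) :
    ‖p 0‖ ^ 2 ≤ √c₁ := by
  rw [← Real.sqrt_sq (by positivity : 0 ≤ ‖p 0‖ ^ 2), ← (mem_Mset_iff.1 hp).1]
  exact Real.sqrt_le_sqrt (le_add_of_nonneg_right (by positivity))

lemma sq_norm_eq_sqrt_iff_of_mem_Mset (hp : p ∈ Mset c₁ c₂) :
    ‖p 0‖ ^ 2 = √c₁ ↔ p 1 = 0 := by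
  rw [← (mem_Mset_iff.1 hp).1, eq_comm, Real.sqrt_eq_iff_eq_sq (by positivity) (by positivity),
    add_eq_left, sq_eq_zero_iff, norm_eq_zero]

lemma sqrt_sub_le_sq_norm_of_mem_Mset (hp : p ∈ Mset c₁ c₂) :
    √(c₁ - c₂) ≤ ‖p 0‖ ^ 2 := by
  obtain ⟨h₁, h₂⟩ := mem_Mset_iff.1 hp
  rw [← Real.sqrt_sq (by positivity : 0 ≤ ‖p 0‖ ^ 2)]
  exact Real.sqrt_le_sqrt (by nlinarith [sq_nonneg ‖p 2‖])

lemma sq_norm_eq_sqrt_sub_iff_of_mem_Mset (hp : p ∈ Mset c₁ c₂)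
    (h : c₂ ≤ c₁) : ‖p 0‖ ^ 2 = √(c₁ - c₂) ↔ p 2 = 0 := by
  obtain ⟨h₁, h₂⟩ := mem_Mset_iff.1 hp
  have h₃ : ‖p 2‖ ^ 2 = 0 ↔ p 2 = 0 := by simp
  rw [eq_comm, Real.sqrt_eq_iff_eq_sq (by linarith) (by positivity), ← h₃]
  constructor <;> intro <;> linarith

lemma maxSet_eq : maxSet c₁ c₂ = {p ∈ Mset c₁ c₂ | p 1 = 0} := by
  simp only [maxSet, re_sq_add_im_sq]
  refine Set.sep_ext_iff.2 fun p hp => ?_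
  rw [sq_norm_eq_sqrt_iff_of_mem_Mset hp]
  refine ⟨fun h => h.2.1, fun h₁ => ⟨h₁, h₁, ?_⟩⟩
  simpa [h₁] using (mem_Mset_iff.1 hp).2

lemma minSet_eq (h : c₂ ≤ c₁) : minSet c₁ c₂ = {p ∈ Mset c₁ c₂ | p 2 = 0} := by
  simp only [minSet, re_sq_add_im_sq]
  refine Set.sep_ext_iff.2 fun p hp => ?_
  rw [sq_norm_eq_sqrt_sub_iff_of_mem_Mset hp h]
  refine ⟨fun h => h.2.2, fun h₂ => ⟨h₂, ?_, h₂⟩⟩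
  simpa [h₂] using (mem_Mset_iff.1 hp).2

lemma fderiv_S₁_apply_of_fderiv_G₂_eq_zero {v : Fin 3 → ℂ} (h : fderiv ℝ G₂ p v = 0) :
    fderiv ℝ S₁ p v = 2 * π * ⟪p 0, v 0⟫ := by
  rw [fderiv_G₂_apply] at h
  rw [fderiv_S₁_apply]
  linear_combination π * h

lemma exists_tangent_fderiv_S₁_ne_zero (h₀ : p 0 ≠ 0) (h₁ : p 1 ≠ 0)
    (h₂ : p 2 ≠ 0) : ∃ v, fderiv ℝ G₁ p v = 0 ∧ fderiv ℝ G₂ p v = 0 ∧ fderiv ℝ S₁ p v ≠ 0 := by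
  set r := ‖p 0‖ ^ 2
  set s := ‖p 1‖ ^ 2
  set t := ‖p 2‖ ^ 2
  set v : Fin 3 → ℂ := ![(s * t) • p 0, (-2 * r ^ 2 * t) • p 1, (2 * r ^ 2 * s) • p 2]
  have hv₀ : ⟪p 0, v 0⟫ = s * t * r := by
    rw [show v 0 = (s * t) • p 0 from rfl, real_inner_smul_right,
      real_inner_self_eq_norm_sq]
  have hv₁ : ⟪p 1, v 1⟫ = -2 * r ^ 2 * t * s := by
    rw [show v 1 = (-2 * r ^ 2 * t) • p 1 from rfl, real_inner_smul_right,
      real_inner_self_eq_norm_sq]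
  have hv₂ : ⟪p 2, v 2⟫ = 2 * r ^ 2 * s * t := by
    rw [show v 2 = (2 * r ^ 2 * s) • p 2 from rfl, real_inner_smul_right,
      real_inner_self_eq_norm_sq]
  have hG₂ : fderiv ℝ G₂ p v = 0 := by rw [fderiv_G₂_apply, hv₁, hv₂]; ring
  refine ⟨v, by rw [fderiv_G₁_apply, hv₀, hv₁]; ring, hG₂, ?_⟩
  rw [fderiv_S₁_apply_of_fderiv_G₂_eq_zero hG₂, hv₀]
  have := pi_pos
  positivity

lemma isCritOnM_iff (hp : p ∈ Mset c₁ c₂) (h₀ : p 0 ≠ 0) :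
    IsCritOnM c₁ c₂ p ↔ p 1 = 0 ∨ p 2 = 0 := by
  simp only [IsCritOnM, hp, true_and]
  constructor
  · intro hcrit
    by_contra! h
    obtain ⟨v, hG₁, hG₂, hS₁⟩ := exists_tangent_fderiv_S₁_ne_zero h₀ h.1 h.2
    exact hS₁ (hcrit v hG₁ hG₂)
  · intro h v hG₁ hG₂
    rw [fderiv_S₁_apply_of_fderiv_G₂_eq_zero hG₂]
    rw [fderiv_G₁_apply] at hG₁
    rw [fderiv_G₂_apply] at hG₂
    have : ‖p 0‖ ^ 2 * ⟪p 0, v 0⟫ = 0 := by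
      rcases h with h | h <;> simp only [h, inner_zero_left] at hG₁ hG₂ <;> linarith
    simpa [h₀] using this

lemma apply_zero_ne_zero_of_mem_Mset (hp : p ∈ Mset c₁ c₂)
    (h : c₂ < c₁) : p 0 ≠ 0 := by
  intro h₀
  have := (Real.sqrt_pos.2 (sub_pos.2 h)).trans_le (sqrt_sub_le_sq_norm_of_mem_Mset hp)
  simp [h₀] at this

lemma setOf_isCritOnM (h : c₂ < c₁) :
    {p | IsCritOnM c₁ c₂ p} = {p ∈ Mset c₁ c₂ | p 1 = 0 ∨ p 2 = 0} := by
  ext p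
  refine ⟨fun hc => ⟨hc.1, ?_⟩, fun ⟨hp, h₁₂⟩ => ?_⟩
  · exact (isCritOnM_iff hc.1 (apply_zero_ne_zero_of_mem_Mset hc.1 h)).1 hc
  · exact (isCritOnM_iff hp (apply_zero_ne_zero_of_mem_Mset hp h)).2 h₁₂

end

theorem example_one_critical_submanifolds_general (c₁ c₂ : ℝ) (h₁₂ : c₂ < c₁) :
    (∀ p ∈ Mset c₁ c₂, S₁ p ≤ π * (Real.sqrt c₁ + c₂)) ∧
    {p ∈ Mset c₁ c₂ | S₁ p = π * (Real.sqrt c₁ + c₂)} = maxSet c₁ c₂ ∧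
    (∀ p ∈ Mset c₁ c₂, π * (Real.sqrt (c₁ - c₂) + c₂) ≤ S₁ p) ∧
    {p ∈ Mset c₁ c₂ | S₁ p = π * (Real.sqrt (c₁ - c₂) + c₂)} = minSet c₁ c₂ ∧
    {p | IsCritOnM c₁ c₂ p} = maxSet c₁ c₂ ∪ minSet c₁ c₂ := by
  have hS₁_eq_iff {p : Fin 3 → ℂ} (hp : p ∈ Mset c₁ c₂) (a : ℝ) :
      S₁ p = π * (a + c₂) ↔ ‖p 0‖ ^ 2 = a := by
    rw [S₁_eq_of_mem_Mset hp, mul_right_inj' pi_ne_zero, add_left_inj]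
  refine ⟨fun p hp => ?_, ?_, fun p hp => ?_, ?_, ?_⟩
  · rw [S₁_eq_of_mem_Mset hp]
    gcongr
    exact sq_norm_le_sqrt_of_mem_Mset hp
  · rw [maxSet_eq]
    exact Set.sep_ext_iff.2 fun p hp => by rw [hS₁_eq_iff hp, sq_norm_eq_sqrt_iff_of_mem_Mset hp]
  · rw [S₁_eq_of_mem_Mset hp]
    gcongr
    exact sqrt_sub_le_sq_norm_of_mem_Mset hp
  · rw [minSet_eq h₁₂.le]
    exact Set.sep_ext_iff.2 fun p hp => by
      rw [hS₁_eq_iff hp, sq_norm_eq_sqrt_sub_iff_of_mem_Mset hp h₁₂.le]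
  · rw [setOf_isCritOnM h₁₂, maxSet_eq, minSet_eq h₁₂.le, Set.sep_or]

/-- **Example 1 of the paper, the critical submanifolds of `S₁`.**
For `c₁ > c₂ > 0`, the function `S₁ = −λ(Z₁) = π(x₁² + y₁² + c₂)` on `M` attains its maximum
value `π(√c₁ + c₂)` exactly on `maxSet`, its minimum value `π(√(c₁ − c₂) + c₂)` exactly on
`minSet`, and these are its only critical submanifolds on `M`. -/
theorem example_one_critical_submanifolds (c₁ c₂ : ℝ) (h₁₂ : c₂ < c₁) (h₂ : 0 < c₂) :
    (∀ p ∈ Mset c₁ c₂, S₁ p ≤ π * (Real.sqrt c₁ + c₂)) ∧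
    {p ∈ Mset c₁ c₂ | S₁ p = π * (Real.sqrt c₁ + c₂)} = maxSet c₁ c₂ ∧
    (∀ p ∈ Mset c₁ c₂, π * (Real.sqrt (c₁ - c₂) + c₂) ≤ S₁ p) ∧
    {p ∈ Mset c₁ c₂ | S₁ p = π * (Real.sqrt (c₁ - c₂) + c₂)} = minSet c₁ c₂ ∧
    {p | IsCritOnM c₁ c₂ p} = maxSet c₁ c₂ ∪ minSet c₁ c₂ :=
  example_one_critical_submanifolds_general c₁ c₂ h₁₂
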